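/- Let (X,d) be a metric space with partial order ≼ and let S,T : X → B(X) satisfy the generalized (ψ,φ)-weak contractive condition, where ψ ∈ Υ and φ : [0,∞) → [0,∞) has property (P). Let {x_n} be a sequence in X with x_{2n+1} ∈ Sx_{2n} =: A_{2n}, x_{2n+2} ∈ Tx_{2n+1} =: A_{2n+1}, and x_{n+1} ≼ x_n for all n ≥ 0. Then {x_n} is a Cauchy sequence in (X,d). -/

import Mathlib

/-!
Write `pₙ = δ(xₙ, Aₙ)` and `dₙ = δ(Aₙ, Aₙ₊₁)`. On consecutive points `M(xₙ, xₙ₊₁) = max(pₙ, pₙ₊₁)`,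
so property (P) forbids `dₙ₊₁ > dₙ`; with `(dₙ)` nonincreasing, `φ(M(xₙ₊₁, xₙ₊₂)) ≤ ψ(dₙ) - ψ(dₙ₊₁)`
telescopes and gives `pₙ → 0`, hence `d(xₙ, xₙ₊₁) → 0`. If the even subsequence were not Cauchy,
there would be `ε > 0` and `k < mₖ` with `d(x_{2mₖ}, x_{2k}) → ε`; then `δ(A_{2mₖ}, A_{2k+1})` and
`M(x_{2mₖ}, x_{2k+1})` both tend to `ε`, and along a subsequence on which both `ψ`-values converge,
the class `Υ` makes the limits agree, so `φ(M) → 0` and `ε = 0`. All points of the orbit are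
comparable because it is a decreasing chain.
-/

open Filter Topology Bornology

/-- δ(A,B) = sup{d(a,b) : a ∈ A, b ∈ B}. -/
noncomputable def setDelta {X : Type*} [MetricSpace X] (A B : Set X) : ℝ :=
  sSup {r : ℝ | ∃ a ∈ A, ∃ b ∈ B, r = dist a b}

/-- D(A,B) = inf{d(a,b) : a ∈ A, b ∈ B}. -/
noncomputable def setInfDist {X : Type*} [MetricSpace X] (A B : Set X) : ℝ :=
  sInf {r : ℝ | ∃ a ∈ A, ∃ b ∈ B, r = dist a b}

/-- M(x,y) = max{d(x,y), δ(x,Sx), δ(y,Ty), (D(x,Ty)+D(y,Sx))/2}. -/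
noncomputable def genM {X : Type*} [MetricSpace X] (S T : X → Set X) (x y : X) : ℝ :=
  max (max (dist x y) (setDelta {x} (S x)))
      (max (setDelta {y} (T y))
        ((setInfDist {x} (T y) + setInfDist {y} (S x)) / 2))

/-- ψ ∈ Υ : ψ : [0,∞) → [0,∞) is nondecreasing and for any two nonnegative sequences with
the same limit, the sequences of ψ-values have the same limit. -/
def PsiClass (ψ : ℝ → ℝ) : Prop :=
  (∀ t, 0 ≤ t → 0 ≤ ψ t) ∧
  (∀ s t, 0 ≤ s → s ≤ t → ψ s ≤ ψ t) ∧
  (∀ (a b : ℕ → ℝ) (L la lb : ℝ), (∀ n, 0 ≤ a n) → (∀ n, 0 ≤ b n) →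
    Filter.Tendsto a Filter.atTop (nhds L) → Filter.Tendsto b Filter.atTop (nhds L) →
    Filter.Tendsto (fun n => ψ (a n)) Filter.atTop (nhds la) →
    Filter.Tendsto (fun n => ψ (b n)) Filter.atTop (nhds lb) → la = lb)

/-- Property (P) for φ : [0,∞) → [0,∞): if φ(t_n) → 0 then t_n → 0. -/
def PropP (φ : ℝ → ℝ) : Prop :=
  (∀ t, 0 ≤ t → 0 ≤ φ t) ∧
  (∀ t : ℕ → ℝ, (∀ n, 0 ≤ t n) →
    Filter.Tendsto (fun n => φ (t n)) Filter.atTop (nhds 0) →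
    Filter.Tendsto t Filter.atTop (nhds 0))

section SetDistance

variable {X : Type*} [MetricSpace X] {A B : Set X} {a b : X} {C : ℝ}

lemma dist_le_setDelta (hA : IsBounded A) (hB : IsBounded B) (ha : a ∈ A) (hb : b ∈ B) :
    dist a b ≤ setDelta A B := by
  obtain ⟨C, hC⟩ := Metric.isBounded_iff.mp (hA.union hB)
  exact le_csSup ⟨C, fun r ⟨a, ha, b, hb, hr⟩ => hr ▸ hC (.inl ha) (.inr hb)⟩ ⟨a, ha, b, hb, rfl⟩

lemma setDelta_le (hA : A.Nonempty) (hB : B.Nonempty) (h : ∀ a ∈ A, ∀ b ∈ B, dist a b ≤ C) :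
    setDelta A B ≤ C := by
  obtain ⟨a, ha⟩ := hA
  obtain ⟨b, hb⟩ := hB
  exact csSup_le ⟨dist a b, a, ha, b, hb, rfl⟩ fun r ⟨a, ha, b, hb, hr⟩ => hr ▸ h a ha b hb

lemma setDelta_comm (A B : Set X) : setDelta A B = setDelta B A := by
  simp only [setDelta]
  congr 1
  ext r
  constructor <;> rintro ⟨a, ha, b, hb, rfl⟩ <;> exact ⟨b, hb, a, ha, dist_comm a b⟩

lemma setInfDist_le (ha : a ∈ A) (hb : b ∈ B) : setInfDist A B ≤ dist a b :=
  csInf_le ⟨0, fun _ ⟨_, _, _, _, hr⟩ => hr ▸ dist_nonneg⟩ ⟨a, ha, b, hb, rfl⟩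

lemma setDelta_singleton_le (hA : IsBounded A) (hB : IsBounded B) (hB' : B.Nonempty)
    (ha : a ∈ A) : setDelta {a} B ≤ setDelta A B :=
  setDelta_le (Set.singleton_nonempty a) hB' fun _ ha' _ hb =>
    ha' ▸ dist_le_setDelta hA hB ha hb

lemma setDelta_le_add_dist_add (hA : IsBounded A) (hB : IsBounded B) (hA' : A.Nonempty)
    (hB' : B.Nonempty) (a b : X) :
    setDelta A B ≤ setDelta {a} A + dist a b + setDelta {b} B := by
  refine setDelta_le hA' hB' fun a' ha' b' hb' => ?_
  calc dist a' b' ≤ dist a' a + dist a b + dist b b' := dist_triangle4 a' a b b'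
    _ ≤ setDelta {a} A + dist a b + setDelta {b} B := by
      rw [dist_comm a' a]
      gcongr <;> exact dist_le_setDelta isBounded_singleton ‹_› rfl ‹_›

end SetDistance

section Sequences

variable {X : Type*} [MetricSpace X]

lemma tendsto_dist_of_tendsto_dist {ι : Type*} {l : Filter ι} {a b a' b' : ι → X} {r : ℝ}
    (h : Tendsto (fun k => dist (a k) (b k)) l (𝓝 r))
    (ha : Tendsto (fun k => dist (a k) (a' k)) l (𝓝 0))
    (hb : Tendsto (fun k => dist (b k) (b' k)) l (𝓝 0)) :
    Tendsto (fun k => dist (a' k) (b' k)) l (𝓝 r) :=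
  h.congr_dist <| squeeze_zero (fun _ => dist_nonneg) (fun _ => dist_dist_dist_le _ _ _ _)
    (by simpa using ha.add hb)

lemma tendsto_dist_comp_add {y : ℕ → X}
    (he : Tendsto (fun n => dist (y n) (y (n + 1))) atTop (𝓝 0)) {ι : Type*} {l : Filter ι}
    {u : ι → ℕ} (hu : Tendsto u l atTop) (j : ℕ) :
    Tendsto (fun k => dist (y (u k)) (y (u k + j))) l (𝓝 0) := by
  refine (?_ : Tendsto (fun n => dist (y n) (y (n + j))) atTop (𝓝 0)).comp hu
  induction j with
  | zero => simp
  | succ j ih =>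
    refine squeeze_zero (fun _ => dist_nonneg) (fun n => dist_triangle _ (y (n + j)) _) ?_
    simpa [add_assoc] using ih.add (he.comp (tendsto_add_atTop_nat j))

lemma CauchySeq.of_tendsto_dist {f g : ℕ → X} (hf : CauchySeq f)
    (h : Tendsto (fun n => dist (f n) (g n)) atTop (𝓝 0)) : CauchySeq g := by
  rw [cauchySeq_iff_tendsto_dist_atTop_0, ← prod_atTop_atTop_eq] at hf ⊢
  have h₁ := h.comp (tendsto_fst (f := (atTop : Filter ℕ)) (g := (atTop : Filter ℕ)))
  have h₂ := h.comp (tendsto_snd (f := (atTop : Filter ℕ)) (g := (atTop : Filter ℕ)))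
  refine squeeze_zero (fun _ => dist_nonneg) (fun p => ?_) (by simpa using (h₁.add hf).add h₂)
  exact (dist_triangle4 _ (f p.1) (f p.2) _).trans_eq (by rw [dist_comm (g p.1)])

lemma cauchySeq_of_cauchySeq_two_mul {x : ℕ → X} (hx : CauchySeq fun k => x (2 * k))
    (he : Tendsto (fun n => dist (x n) (x (n + 1))) atTop (𝓝 0)) : CauchySeq x := by
  refine (hx.comp_tendsto (Nat.tendsto_div_const_atTop two_ne_zero)).of_tendsto_dist ?_
  have hhalf : Tendsto (fun n => 2 * (n / 2)) atTop atTop :=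
    (tendsto_id.const_mul_atTop' two_pos).comp (Nat.tendsto_div_const_atTop two_ne_zero)
  refine squeeze_zero (fun _ => dist_nonneg) (fun n => ?_)
    (by simpa using tendsto_dist_comp_add he hhalf 1)
  rcases Nat.even_or_odd' n with ⟨k, rfl | rfl⟩ <;> simp [Nat.mul_add_div]

lemma exists_tendsto_dist_of_not_cauchySeq {y : ℕ → X}
    (he : Tendsto (fun n => dist (y n) (y (n + 1))) atTop (𝓝 0)) (hy : ¬CauchySeq y) :
    ∃ ε > 0, ∃ m : ℕ → ℕ, (∀ k, k < m k) ∧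
      Tendsto (fun k => dist (y (m k)) (y k)) atTop (𝓝 ε) := by
  classical
  rw [Metric.cauchySeq_iff'] at hy
  push Not at hy
  obtain ⟨ε, hε, hfar⟩ := hy
  have hex : ∀ k, ∃ m, k < m ∧ ε ≤ dist (y m) (y k) := fun k => by
    obtain ⟨n, hn, hd⟩ := hfar k
    refine ⟨n, hn.lt_of_ne ?_, hd⟩
    rintro rfl
    simp only [dist_self] at hd
    linarith
  set m := fun k => Nat.find (hex k)
  have hkm : ∀ k, k < m k := fun k => (Nat.find_spec (hex k)).1
  -- minimality of `m k` keeps `y (m k - 1)` within `ε` of `y k`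
  have hbefore : ∀ k, dist (y (m k - 1)) (y k) < ε := fun k => by
    rcases (Nat.le_sub_one_of_lt (hkm k)).eq_or_lt with h | h
    · rw [← h, dist_self]; exact hε
    · exact not_le.mp fun hd => Nat.find_min (hex k) (Nat.sub_lt (hkm k).pos one_pos) ⟨h, hd⟩
  have hub : ∀ k, dist (y (m k)) (y k) ≤ ε + dist (y (m k - 1)) (y (m k - 1 + 1)) := fun k => by
    rw [Nat.sub_add_cancel (hkm k).pos]
    linarith [dist_triangle_left (y (m k)) (y k) (y (m k - 1)), hbefore k]
  have hm1 : Tendsto (fun k => m k - 1) atTop atTop :=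
    tendsto_atTop_mono (fun k => Nat.le_sub_one_of_lt (hkm k)) tendsto_id
  refine ⟨ε, hε, m, hkm, tendsto_of_tendsto_of_tendsto_of_le_of_le tendsto_const_nhds ?_
    (fun k => (Nat.find_spec (hex k)).2) hub⟩
  simpa using (tendsto_dist_comp_add he hm1 1).const_add ε

end Sequences

section Control

variable {ψ φ : ℝ → ℝ}

lemma PropP.eq_zero (hφ : PropP φ) {t : ℝ} (ht : 0 ≤ t) (h : φ t ≤ 0) : t = 0 :=
  tendsto_const_nhds_iff.mp <| hφ.2 (fun _ => t) (fun _ => ht) <| by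
    simp [le_antisymm h (hφ.1 t ht)]

lemma PsiClass.exists_subseq_tendsto (hψ : PsiClass ψ) {a b : ℕ → ℝ} {L : ℝ}
    (ha0 : ∀ n, 0 ≤ a n) (hb0 : ∀ n, 0 ≤ b n)
    (ha : Tendsto a atTop (𝓝 L)) (hb : Tendsto b atTop (𝓝 L)) :
    ∃ g : ℕ → ℕ, StrictMono g ∧ ∃ l, Tendsto (fun n => ψ (a (g n))) atTop (𝓝 l) ∧
      Tendsto (fun n => ψ (b (g n))) atTop (𝓝 l) := by
  obtain ⟨Ca, hCa⟩ := ha.bddAbove_range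
  obtain ⟨Cb, hCb⟩ := hb.bddAbove_range
  have hmem : ∀ n, (ψ (a n), ψ (b n)) ∈ Set.Icc 0 (ψ (max Ca Cb)) ×ˢ Set.Icc 0 (ψ (max Ca Cb)) :=
    fun n => ⟨⟨hψ.1 _ (ha0 n), hψ.2.1 _ _ (ha0 n) ((hCa ⟨n, rfl⟩).trans (le_max_left _ _))⟩,
      ⟨hψ.1 _ (hb0 n), hψ.2.1 _ _ (hb0 n) ((hCb ⟨n, rfl⟩).trans (le_max_right _ _))⟩⟩
  obtain ⟨⟨la, lb⟩, -, g, hg, hlim⟩ := (isCompact_Icc.prod isCompact_Icc).tendsto_subseq hmem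
  have hla : Tendsto (fun n => ψ (a (g n))) atTop (𝓝 la) := hlim.fst_nhds
  have hlb : Tendsto (fun n => ψ (b (g n))) atTop (𝓝 lb) := hlim.snd_nhds
  refine ⟨g, hg, la, hla, ?_⟩
  rwa [hψ.2.2 _ _ L la lb (fun n => ha0 (g n)) (fun n => hb0 (g n))
    (ha.comp hg.tendsto_atTop) (hb.comp hg.tendsto_atTop) hla hlb]

lemma PsiClass.eq_zero_of_tendsto (hψ : PsiClass ψ) (hφ : PropP φ) {a b : ℕ → ℝ} {L : ℝ}
    (ha0 : ∀ n, 0 ≤ a n) (hb0 : ∀ n, 0 ≤ b n)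
    (ha : Tendsto a atTop (𝓝 L)) (hb : Tendsto b atTop (𝓝 L))
    (hab : ∀ n, ψ (a n) ≤ ψ (b n) - φ (b n)) : L = 0 := by
  obtain ⟨g, hg, l, hla, hlb⟩ := hψ.exists_subseq_tendsto ha0 hb0 ha hb
  have hφ0 : Tendsto (fun n => φ (b (g n))) atTop (𝓝 0) :=
    tendsto_of_tendsto_of_tendsto_of_le_of_le tendsto_const_nhds
      (by simpa using hlb.sub hla) (fun n => hφ.1 _ (hb0 _)) (fun n => by linarith [hab (g n)])
  exact tendsto_nhds_unique (hb.comp hg.tendsto_atTop) (hφ.2 _ (fun n => hb0 _) hφ0)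

end Control

section Orbit

variable {X : Type*} [MetricSpace X]

/-- `M(xᵢ, xⱼ)` with `S xᵢ` and `T xⱼ` replaced by the sets `A i` and `A j` of the orbit. -/
noncomputable def orbitM (x : ℕ → X) (A : ℕ → Set X) (i j : ℕ) : ℝ :=
  max (max (dist (x i) (x j)) (setDelta {x i} (A i)))
    (max (setDelta {x j} (A j)) ((setInfDist {x i} (A j) + setInfDist {x j} (A i)) / 2))

def OrbitWeakContractive (ψ φ : ℝ → ℝ) (x : ℕ → X) (A : ℕ → Set X) : Prop :=
  ∀ i j, Even i → Odd j →
    ψ (setDelta (A i) (A j)) ≤ ψ (orbitM x A i j) - φ (orbitM x A i j)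

variable {x : ℕ → X} {A : ℕ → Set X} {ψ φ : ℝ → ℝ} {u v : ℕ → ℕ} {r : ℝ}

lemma genM_eq_orbitM {S T : X → Set X} {i j : ℕ} (hS : S (x i) = A i) (hT : T (x j) = A j) :
    genM S T (x i) (x j) = orbitM x A i j := by
  rw [genM, hS, hT, orbitM]

lemma orbitM_comm (x : ℕ → X) (A : ℕ → Set X) (i j : ℕ) : orbitM x A i j = orbitM x A j i := by
  rw [orbitM, orbitM, dist_comm, add_comm, max_max_max_comm]

lemma dist_le_orbitM (i j : ℕ) : dist (x i) (x j) ≤ orbitM x A i j :=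
  le_max_of_le_left (le_max_left _ _)

lemma orbitM_le (hxA : ∀ n, x (n + 1) ∈ A n) (i j : ℕ) :
    orbitM x A i j ≤ max (max (dist (x i) (x j)) (setDelta {x i} (A i)))
      (max (setDelta {x j} (A j)) ((dist (x i) (x (j + 1)) + dist (x j) (x (i + 1))) / 2)) := by
  unfold orbitM
  gcongr <;> exact setInfDist_le rfl (hxA _)

lemma orbitM_nonneg (i j : ℕ) : 0 ≤ orbitM x A i j :=
  dist_nonneg.trans (dist_le_orbitM i j)

lemma dist_succ_le_setDelta_singleton (hxA : ∀ n, x (n + 1) ∈ A n) (hA : ∀ n, IsBounded (A n))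
    (n : ℕ) : dist (x n) (x (n + 1)) ≤ setDelta {x n} (A n) :=
  dist_le_setDelta isBounded_singleton (hA n) rfl (hxA n)

lemma setDelta_singleton_orbit_nonneg (hxA : ∀ n, x (n + 1) ∈ A n)
    (hA : ∀ n, IsBounded (A n)) (n : ℕ) : 0 ≤ setDelta {x n} (A n) :=
  dist_nonneg.trans (dist_succ_le_setDelta_singleton hxA hA n)

lemma setDelta_orbit_nonneg (hxA : ∀ n, x (n + 1) ∈ A n) (hA : ∀ n, IsBounded (A n))
    (i j : ℕ) : 0 ≤ setDelta (A i) (A j) :=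
  dist_nonneg.trans (dist_le_setDelta (hA i) (hA j) (hxA i) (hxA j))

lemma setDelta_orbit_le (hxA : ∀ n, x (n + 1) ∈ A n) (hA : ∀ n, IsBounded (A n)) (i j : ℕ) :
    setDelta (A i) (A j) ≤ setDelta {x i} (A i) + dist (x i) (x j) + setDelta {x j} (A j) :=
  setDelta_le_add_dist_add (hA i) (hA j) ⟨_, hxA i⟩ ⟨_, hxA j⟩ _ _

lemma setDelta_singleton_succ_le (hxA : ∀ n, x (n + 1) ∈ A n) (hA : ∀ n, IsBounded (A n))
    (n : ℕ) : setDelta {x (n + 1)} (A (n + 1)) ≤ setDelta (A n) (A (n + 1)) :=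
  setDelta_singleton_le (hA n) (hA (n + 1)) ⟨_, hxA (n + 1)⟩ (hxA n)

lemma orbitM_succ (hxA : ∀ n, x (n + 1) ∈ A n) (hA : ∀ n, IsBounded (A n)) (n : ℕ) :
    orbitM x A n (n + 1) = max (setDelta {x n} (A n)) (setDelta {x (n + 1)} (A (n + 1))) := by
  have h₀ := dist_succ_le_setDelta_singleton hxA hA n
  have h₁ := dist_succ_le_setDelta_singleton hxA hA (n + 1)
  have hmid : dist (x n) (x (n + 1 + 1)) ≤ dist (x n) (x (n + 1)) + dist (x (n + 1)) (x (n + 2)) :=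
    dist_triangle _ _ _
  refine le_antisymm ((orbitM_le hxA n (n + 1)).trans ?_) ?_
  · refine max_le (max_le (h₀.trans (le_max_left _ _)) (le_max_left _ _))
      (max_le (le_max_right _ _) ?_)
    rw [dist_self]
    linarith [le_max_left (setDelta {x n} (A n)) (setDelta {x (n + 1)} (A (n + 1))),
      le_max_right (setDelta {x n} (A n)) (setDelta {x (n + 1)} (A (n + 1)))]
  · exact max_le (le_max_of_le_left (le_max_right _ _)) (le_max_of_le_right (le_max_left _ _))

lemma OrbitWeakContractive.succ (h : OrbitWeakContractive ψ φ x A) (n : ℕ) :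
    ψ (setDelta (A n) (A (n + 1))) ≤ ψ (orbitM x A n (n + 1)) - φ (orbitM x A n (n + 1)) := by
  rcases Nat.even_or_odd n with hn | hn
  · exact h _ _ hn hn.add_one
  · rw [setDelta_comm, orbitM_comm]
    exact h _ _ hn.add_one hn

lemma OrbitWeakContractive.antitone_setDelta (h : OrbitWeakContractive ψ φ x A)
    (hψ : PsiClass ψ) (hφ : PropP φ) (hxA : ∀ n, x (n + 1) ∈ A n) (hA : ∀ n, IsBounded (A n)) :
    Antitone fun n => setDelta (A n) (A (n + 1)) := by
  refine antitone_nat_of_succ_le fun n => ?_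
  by_contra! hlt
  have hM := orbitM_succ hxA hA (n + 1)
  -- if the diameters increased, `M` would be dominated by the diameter and `φ(M)` would vanish
  have hψM : ψ (orbitM x A (n + 1) (n + 2)) ≤ ψ (setDelta (A (n + 1)) (A (n + 2))) :=
    hψ.2.1 _ _ (orbitM_nonneg _ _) <| hM ▸ max_le
      ((setDelta_singleton_succ_le hxA hA n).trans hlt.le) (setDelta_singleton_succ_le hxA hA _)
  have hM_eq := hφ.eq_zero (orbitM_nonneg _ _) (by linarith [h.succ (n + 1)])
  rw [hM_eq] at hM
  linarith [setDelta_orbit_le hxA hA (n + 1) (n + 2),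
    dist_succ_le_setDelta_singleton hxA hA (n + 1),
    le_max_left (setDelta {x (n + 1)} (A (n + 1))) (setDelta {x (n + 2)} (A (n + 2))),
    le_max_right (setDelta {x (n + 1)} (A (n + 1))) (setDelta {x (n + 2)} (A (n + 2))),
    setDelta_orbit_nonneg hxA hA n (n + 1)]

lemma OrbitWeakContractive.tendsto_setDelta_singleton (h : OrbitWeakContractive ψ φ x A)
    (hψ : PsiClass ψ) (hφ : PropP φ) (hxA : ∀ n, x (n + 1) ∈ A n) (hA : ∀ n, IsBounded (A n)) :
    Tendsto (fun n => setDelta {x n} (A n)) atTop (𝓝 0) := by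
  set d := fun n => setDelta (A n) (A (n + 1))
  have hψd : Antitone (ψ ∘ d) := fun m n hmn =>
    hψ.2.1 _ _ (setDelta_orbit_nonneg hxA hA _ _) (h.antitone_setDelta hψ hφ hxA hA hmn)
  have hlim := tendsto_atTop_ciInf hψd
    ⟨0, fun _ ⟨n, hn⟩ => hn ▸ hψ.1 _ (setDelta_orbit_nonneg hxA hA _ _)⟩
  have hφ0 : Tendsto (fun n => φ (orbitM x A (n + 1) (n + 2))) atTop (𝓝 0) := by
    refine tendsto_of_tendsto_of_tendsto_of_le_of_le tendsto_const_nhds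
      (by simpa using hlim.sub ((tendsto_add_atTop_iff_nat 1).mpr hlim))
      (fun n => hφ.1 _ (orbitM_nonneg _ _)) fun n => ?_
    have hMd : orbitM x A (n + 1) (n + 2) ≤ d n := by
      rw [orbitM_succ hxA hA]
      exact max_le (setDelta_singleton_succ_le hxA hA n)
        ((setDelta_singleton_succ_le hxA hA _).trans (h.antitone_setDelta hψ hφ hxA hA n.le_succ))
    have := hψ.2.1 _ _ (orbitM_nonneg _ _) hMd
    have := h.succ (n + 1)
    simp only [d]
    linarith
  have hM := hφ.2 _ (fun n => orbitM_nonneg _ _) hφ0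
  rw [← tendsto_add_atTop_iff_nat 1]
  refine squeeze_zero (fun n => setDelta_singleton_orbit_nonneg hxA hA _) (fun n => ?_) hM
  rw [orbitM_succ hxA hA]
  exact le_max_left _ _

lemma tendsto_dist_succ_of_tendsto_setDelta (hxA : ∀ n, x (n + 1) ∈ A n)
    (hA : ∀ n, IsBounded (A n)) (hp : Tendsto (fun n => setDelta {x n} (A n)) atTop (𝓝 0)) :
    Tendsto (fun n => dist (x n) (x (n + 1))) atTop (𝓝 0) :=
  squeeze_zero (fun _ => dist_nonneg) (dist_succ_le_setDelta_singleton hxA hA) hp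

lemma tendsto_setDelta_orbit_of_tendsto_dist (hxA : ∀ n, x (n + 1) ∈ A n)
    (hA : ∀ n, IsBounded (A n)) (hp : Tendsto (fun n => setDelta {x n} (A n)) atTop (𝓝 0))
    (hu : Tendsto u atTop atTop) (hv : Tendsto v atTop atTop)
    (h : Tendsto (fun k => dist (x (u k)) (x (v k))) atTop (𝓝 r)) :
    Tendsto (fun k => setDelta (A (u k)) (A (v k))) atTop (𝓝 r) := by
  have he := tendsto_dist_succ_of_tendsto_setDelta hxA hA hp
  have hlow : Tendsto (fun k => dist (x (u k + 1)) (x (v k + 1))) atTop (𝓝 r) :=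
    tendsto_dist_of_tendsto_dist h (tendsto_dist_comp_add he hu 1) (tendsto_dist_comp_add he hv 1)
  refine tendsto_of_tendsto_of_tendsto_of_le_of_le hlow
    (by simpa using ((hp.comp hu).add h).add (hp.comp hv))
    (fun k => dist_le_setDelta (hA _) (hA _) (hxA _) (hxA _)) fun k => setDelta_orbit_le hxA hA _ _

lemma tendsto_orbitM_of_tendsto_dist (hxA : ∀ n, x (n + 1) ∈ A n)
    (hA : ∀ n, IsBounded (A n)) (hp : Tendsto (fun n => setDelta {x n} (A n)) atTop (𝓝 0))
    (hu : Tendsto u atTop atTop) (hv : Tendsto v atTop atTop)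
    (h : Tendsto (fun k => dist (x (u k)) (x (v k))) atTop (𝓝 r)) :
    Tendsto (fun k => orbitM x A (u k) (v k)) atTop (𝓝 r) := by
  have he := tendsto_dist_succ_of_tendsto_setDelta hxA hA hp
  have hr : 0 ≤ r := ge_of_tendsto' h fun _ => dist_nonneg
  have h₁ : Tendsto (fun k => dist (x (u k)) (x (v k + 1))) atTop (𝓝 r) :=
    tendsto_dist_of_tendsto_dist h (by simp) (tendsto_dist_comp_add he hv 1)
  have h₂ : Tendsto (fun k => dist (x (v k)) (x (u k + 1))) atTop (𝓝 r) :=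
    tendsto_dist_of_tendsto_dist (by simpa only [dist_comm] using h)
      (by simp) (tendsto_dist_comp_add he hu 1)
  have hup := (h.max (hp.comp hu)).max ((hp.comp hv).max ((h₁.add h₂).div_const 2))
  rw [max_eq_left hr, add_self_div_two, max_eq_right hr, max_self] at hup
  exact tendsto_of_tendsto_of_tendsto_of_le_of_le h hup (fun k => dist_le_orbitM _ _)
    fun k => orbitM_le hxA _ _

lemma OrbitWeakContractive.cauchySeq (h : OrbitWeakContractive ψ φ x A)
    (hψ : PsiClass ψ) (hφ : PropP φ) (hxA : ∀ n, x (n + 1) ∈ A n) (hA : ∀ n, IsBounded (A n)) :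
    CauchySeq x := by
  have hp := h.tendsto_setDelta_singleton hψ hφ hxA hA
  have he := tendsto_dist_succ_of_tendsto_setDelta hxA hA hp
  have hmul : Tendsto (fun k : ℕ => 2 * k) atTop atTop := tendsto_id.const_mul_atTop' two_pos
  refine cauchySeq_of_cauchySeq_two_mul (by_contra fun hy => ?_) he
  obtain ⟨ε, hε, m, hm, hlim⟩ := exists_tendsto_dist_of_not_cauchySeq
    (by simpa [mul_add] using tendsto_dist_comp_add he hmul 2) hy
  have hu : Tendsto (fun k => 2 * m k) atTop atTop :=
    hmul.comp (tendsto_atTop_mono (fun k => (hm k).le) tendsto_id)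
  have hv : Tendsto (fun k => 2 * k + 1) atTop atTop := (tendsto_add_atTop_nat 1).comp hmul
  have hdist : Tendsto (fun k => dist (x (2 * m k)) (x (2 * k + 1))) atTop (𝓝 ε) :=
    tendsto_dist_of_tendsto_dist hlim (by simp) (tendsto_dist_comp_add he hmul 1)
  exact hε.ne' <| hψ.eq_zero_of_tendsto hφ (fun k => setDelta_orbit_nonneg hxA hA _ _)
    (fun k => orbitM_nonneg _ _) (tendsto_setDelta_orbit_of_tendsto_dist hxA hA hp hu hv hdist)
    (tendsto_orbitM_of_tendsto_dist hxA hA hp hu hv hdist)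
    fun k => h _ _ (even_two_mul _) (odd_two_mul_add_one k)

end Orbit

/-- Along the alternating orbit of a generalized (ψ,φ)-weak contraction pair,
the sequence {x_n} is a Cauchy sequence. -/
theorem orbit_cauchy {X : Type*} [MetricSpace X] [PartialOrder X]
    (S T : X → Set X)
    (hS : ∀ x, (S x).Nonempty ∧ IsBounded (S x))
    (hT : ∀ x, (T x).Nonempty ∧ IsBounded (T x))
    (ψ φ : ℝ → ℝ) (hψ : PsiClass ψ) (hφ : PropP φ)
    (hcontr : ∀ x y : X, (x ≤ y ∨ y ≤ x) →
      ψ (setDelta (S x) (T y)) ≤ ψ (genM S T x y) - φ (genM S T x y))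
    (x : ℕ → X) (A : ℕ → Set X)
    (hAeven : ∀ n, A (2 * n) = S (x (2 * n)))
    (hAodd : ∀ n, A (2 * n + 1) = T (x (2 * n + 1)))
    (hxS : ∀ n, x (2 * n + 1) ∈ S (x (2 * n)))
    (hxT : ∀ n, x (2 * n + 2) ∈ T (x (2 * n + 1)))
    (hdec : ∀ n, x (n + 1) ≤ x n) :
    CauchySeq x := by
  have horbit : ∀ n, x (n + 1) ∈ A n ∧ IsBounded (A n) := by
    intro n
    obtain ⟨k, rfl | rfl⟩ := Nat.even_or_odd' n
    · rw [hAeven]; exact ⟨hxS k, (hS _).2⟩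
    · rw [hAodd]; exact ⟨hxT k, (hT _).2⟩
  have hanti : Antitone x := antitone_nat_of_succ_le hdec
  refine OrbitWeakContractive.cauchySeq ?_ hψ hφ (fun n => (horbit n).1) (fun n => (horbit n).2)
  rintro _ _ ⟨i, rfl⟩ ⟨j, rfl⟩
  rw [← two_mul, ← genM_eq_orbitM (hAeven i).symm (hAodd j).symm, hAeven, hAodd]
  exact hcontr _ _ ((le_total (2 * i) (2 * j + 1)).imp (hanti ·) (hanti ·)).symm
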